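/- Let k ≥ 2, let M be a d × d real symmetric positive-definite matrix, and let A be a d × d real symmetric positive-definite matrix with operator norm ‖A‖ = 1 whose eigenvalues are s₁ ≥ … ≥ s_d > 0 with orthonormal eigenbasis w₁, …, w_d. Assume that λ₁(AMA) ≥ (1/k)·Tr(AMA). Then for every unit eigenvector q of AMA corresponding to the eigenvalue λ₁(AMA) and every j ∈ {1, …, d}, one has |⟨q, w_j⟩|/s_j ≤ k·λ₁(M)/λ_d(M). -/

import Mathlib

/-!
Let `L = λ₁(AMA)`. Pairing `AMA q = L q` with `w_j`, and moving the symmetric `A` across onto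
`A w_j = s_j w_j`, gives `L ⟨q, w_j⟩ = s_j ⟨M A q, w_j⟩`; by Cauchy–Schwarz and `‖A‖ = 1`,
`|⟨M A q, w_j⟩| ≤ λ₁(M)`. On the other hand `w₁` is fixed by `A`, so testing the Rayleigh
quotient of `AMA` at `w₁` gives `L ≥ ⟨w₁, M w₁⟩ ≥ λ_d(M)`. Hence
`|⟨q, w_j⟩| / s_j ≤ λ₁(M) / λ_d(M) ≤ k λ₁(M) / λ_d(M)`.
-/

open Matrix

/-- The eigenvalues of a Hermitian (real symmetric) matrix, listed in decreasing order:
index `i` gives the `(i+1)`-th largest eigenvalue. For non-Hermitian matrices we return `0`. -/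
noncomputable def sortedEigs {d : ℕ} (M : Matrix (Fin d) (Fin d) ℝ) : Fin d → ℝ :=
  if h : M.IsHermitian then
    fun i => (h.eigenvalues ∘ Tuple.sort h.eigenvalues) i.rev
  else fun _ => 0

lemma OrthonormalBasis.dotProduct_eq_sum {ι n : Type*} [Fintype ι] [Fintype n]
    (b : OrthonormalBasis ι ℝ (EuclideanSpace ℝ n)) (x y : n → ℝ) :
    x ⬝ᵥ y = ∑ i, (⇑(b i) ⬝ᵥ x) * (⇑(b i) ⬝ᵥ y) := by
  simpa [EuclideanSpace.inner_eq_star_dotProduct, dotProduct_comm] using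
    (b.sum_inner_mul_inner (WithLp.toLp 2 x) (WithLp.toLp 2 y)).symm

namespace Matrix.IsHermitian

variable {n : Type*} [Fintype n] {N : Matrix n n ℝ}

lemma mulVec_dotProduct (hN : N.IsHermitian) (x y : n → ℝ) :
    (N *ᵥ x) ⬝ᵥ y = x ⬝ᵥ (N *ᵥ y) := by
  rw [dotProduct_comm, dotProduct_mulVec, ← vecMul_transpose,
    ← conjTranspose_eq_transpose_of_trivial, hN.eq, dotProduct_comm]

variable [DecidableEq n]

lemma eigenvectorBasis_dotProduct_mulVec (hN : N.IsHermitian) (v : n → ℝ) (i : n) :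
    ⇑(hN.eigenvectorBasis i) ⬝ᵥ (N *ᵥ v) =
      hN.eigenvalues i * (⇑(hN.eigenvectorBasis i) ⬝ᵥ v) := by
  rw [← hN.mulVec_dotProduct, hN.mulVec_eigenvectorBasis, smul_dotProduct, smul_eq_mul]

lemma dotProduct_mulVec_le (hN : N.IsHermitian) {c : ℝ} (hc : ∀ i, hN.eigenvalues i ≤ c)
    (v : n → ℝ) : v ⬝ᵥ (N *ᵥ v) ≤ c * (v ⬝ᵥ v) := by
  rw [hN.eigenvectorBasis.dotProduct_eq_sum, hN.eigenvectorBasis.dotProduct_eq_sum v v,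
    Finset.mul_sum]
  refine Finset.sum_le_sum fun i _ => ?_
  rw [eigenvectorBasis_dotProduct_mulVec, mul_left_comm _ (hN.eigenvalues i)]
  exact mul_le_mul_of_nonneg_right (hc i) (mul_self_nonneg _)

lemma le_dotProduct_mulVec (hN : N.IsHermitian) {c : ℝ} (hc : ∀ i, c ≤ hN.eigenvalues i)
    (v : n → ℝ) : c * (v ⬝ᵥ v) ≤ v ⬝ᵥ (N *ᵥ v) := by
  rw [hN.eigenvectorBasis.dotProduct_eq_sum v (N *ᵥ v),
    hN.eigenvectorBasis.dotProduct_eq_sum v v, Finset.mul_sum]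
  refine Finset.sum_le_sum fun i _ => ?_
  rw [eigenvectorBasis_dotProduct_mulVec, mul_left_comm _ (hN.eigenvalues i)]
  exact mul_le_mul_of_nonneg_right (hc i) (mul_self_nonneg _)

lemma mulVec_dotProduct_mulVec_le (hN : N.IsHermitian) {c : ℝ}
    (hc : ∀ i, |hN.eigenvalues i| ≤ c) (v : n → ℝ) :
    (N *ᵥ v) ⬝ᵥ (N *ᵥ v) ≤ c ^ 2 * (v ⬝ᵥ v) := by
  rw [hN.eigenvectorBasis.dotProduct_eq_sum, hN.eigenvectorBasis.dotProduct_eq_sum v v,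
    Finset.mul_sum]
  refine Finset.sum_le_sum fun i _ => ?_
  rw [eigenvectorBasis_dotProduct_mulVec, mul_mul_mul_comm, ← sq]
  exact mul_le_mul_of_nonneg_right (sq_le_sq' (abs_le.mp (hc i)).1 (abs_le.mp (hc i)).2)
    (mul_self_nonneg _)

lemma abs_mulVec_dotProduct_le (hN : N.IsHermitian) {c : ℝ} (hc0 : 0 ≤ c)
    (hc : ∀ i, |hN.eigenvalues i| ≤ c) {v w : n → ℝ} (hv : v ⬝ᵥ v ≤ 1) (hw : w ⬝ᵥ w ≤ 1) :
    |(N *ᵥ v) ⬝ᵥ w| ≤ c := by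
  refine abs_le_of_sq_le_sq ?_ hc0
  calc ((N *ᵥ v) ⬝ᵥ w) ^ 2 ≤ ((N *ᵥ v) ⬝ᵥ (N *ᵥ v)) * (w ⬝ᵥ w) := by
        simpa only [dotProduct, sq] using Finset.sum_mul_sq_le_sq_mul_sq _ (N *ᵥ v) w
    _ ≤ c ^ 2 * (v ⬝ᵥ v) * 1 :=
        mul_le_mul (hN.mulVec_dotProduct_mulVec_le hc v) hw (dotProduct_star_self_nonneg w)
          (mul_nonneg (sq_nonneg c) (dotProduct_star_self_nonneg v))
    _ ≤ c ^ 2 := by rw [mul_one]; exact mul_le_of_le_one_right (sq_nonneg c) hv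

end Matrix.IsHermitian

section sortedEigs

variable {d : ℕ} {N : Matrix (Fin d) (Fin d) ℝ}

lemma sortedEigs_antitone (N : Matrix (Fin d) (Fin d) ℝ) : Antitone (sortedEigs N) := by
  unfold sortedEigs
  split_ifs with hN
  · exact fun i j hij => Tuple.monotone_sort hN.eigenvalues (Fin.rev_le_rev.mpr hij)
  · exact antitone_const

lemma Matrix.IsHermitian.sortedEigs_eq (hN : N.IsHermitian) (i : Fin d) :
    sortedEigs N i = hN.eigenvalues (Tuple.sort hN.eigenvalues i.rev) := by
  rw [sortedEigs, dif_pos hN]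
  rfl

lemma Matrix.IsHermitian.exists_sortedEigs_eq (hN : N.IsHermitian) (i : Fin d) :
    ∃ j, sortedEigs N j = hN.eigenvalues i :=
  ⟨((Tuple.sort hN.eigenvalues)⁻¹ i).rev, by simp [hN.sortedEigs_eq]⟩

lemma Matrix.IsHermitian.eigenvalues_le_sortedEigs_zero (hd : 1 ≤ d) (hN : N.IsHermitian)
    (i : Fin d) : hN.eigenvalues i ≤ sortedEigs N ⟨0, hd⟩ := by
  obtain ⟨j, hj⟩ := hN.exists_sortedEigs_eq i
  exact hj ▸ sortedEigs_antitone N (Fin.le_def.mpr (Nat.zero_le _))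

lemma Matrix.IsHermitian.sortedEigs_last_le_eigenvalues (hd : 1 ≤ d) (hN : N.IsHermitian)
    (i : Fin d) : sortedEigs N ⟨d - 1, by omega⟩ ≤ hN.eigenvalues i := by
  obtain ⟨j, hj⟩ := hN.exists_sortedEigs_eq i
  exact hj ▸ sortedEigs_antitone N (Fin.le_def.mpr (Nat.le_sub_one_of_lt j.isLt))

lemma Matrix.PosDef.sortedEigs_pos (hN : N.PosDef) (i : Fin d) : 0 < sortedEigs N i := by
  rw [hN.1.sortedEigs_eq]
  exact hN.eigenvalues_pos _

lemma Matrix.PosDef.abs_eigenvalues_le_sortedEigs_zero (hd : 1 ≤ d) (hN : N.PosDef)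
    (i : Fin d) : |hN.1.eigenvalues i| ≤ sortedEigs N ⟨0, hd⟩ := by
  rw [abs_of_pos (hN.eigenvalues_pos i)]
  exact hN.1.eigenvalues_le_sortedEigs_zero hd i

lemma sortedEigs_last_le_sortedEigs_zero_mul_mul (hd : 1 ≤ d) {A M : Matrix (Fin d) (Fin d) ℝ}
    (hA : A.IsHermitian) (hM : M.IsHermitian) {v : Fin d → ℝ} (hAv : A *ᵥ v = v)
    (hv : v ⬝ᵥ v = 1) : sortedEigs M ⟨d - 1, by omega⟩ ≤ sortedEigs (A * M * A) ⟨0, hd⟩ := by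
  have hAMA : (A * M * A).IsHermitian := by
    simpa only [hA.eq] using isHermitian_conjTranspose_mul_mul A hM
  calc sortedEigs M ⟨d - 1, by omega⟩
      = sortedEigs M ⟨d - 1, by omega⟩ * (v ⬝ᵥ v) := by rw [hv, mul_one]
    _ ≤ v ⬝ᵥ (M *ᵥ v) := hM.le_dotProduct_mulVec (hM.sortedEigs_last_le_eigenvalues hd) v
    _ = v ⬝ᵥ ((A * M * A) *ᵥ v) := by
        rw [← mulVec_mulVec, ← mulVec_mulVec, hAv, ← hA.mulVec_dotProduct, hAv]
    _ ≤ sortedEigs (A * M * A) ⟨0, hd⟩ * (v ⬝ᵥ v) :=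
        hAMA.dotProduct_mulVec_le (hAMA.eigenvalues_le_sortedEigs_zero hd) v
    _ = sortedEigs (A * M * A) ⟨0, hd⟩ := by rw [hv, mul_one]

end sortedEigs

/-- Let `k ≥ 2`, let `M`, `A` be symmetric positive definite with
`‖A‖ = λ₁(A) = 1` (for symmetric positive-definite `A` the operator norm equals the largest
eigenvalue), let `w` be an orthonormal eigenbasis of `A` with eigenvalues
`s_j = sortedEigs A j`, and assume `λ₁(AMA) ≥ (1/k)·Tr(AMA)`. Then every unit eigenvector `q`
of `AMA` for `λ₁(AMA)` satisfies `|⟨q, w_j⟩|/s_j ≤ k·λ₁(M)/λ_d(M)` for every `j`. -/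
theorem stmt12 (d k : ℕ) (hd : 1 ≤ d) (hk : 2 ≤ k)
    (M A : Matrix (Fin d) (Fin d) ℝ) (hM : M.PosDef) (hA : A.PosDef)
    (hAnorm : sortedEigs A ⟨0, hd⟩ = 1)
    (w : Fin d → Fin d → ℝ)
    (hw : ∀ j : Fin d, A.mulVec (w j) = sortedEigs A j • w j)
    (hworth : ∀ i j : Fin d, w i ⬝ᵥ w j = if i = j then 1 else 0)
    (q : Fin d → ℝ) (hq1 : q ⬝ᵥ q = 1)
    (hq2 : (A * M * A).mulVec q = sortedEigs (A * M * A) ⟨0, hd⟩ • q) :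
    ∀ j : Fin d,
      |q ⬝ᵥ w j| / sortedEigs A j
        ≤ (k : ℝ) * sortedEigs M ⟨0, hd⟩ / sortedEigs M ⟨d - 1, by omega⟩ := by
  intro j
  set L := sortedEigs (A * M * A) ⟨0, hd⟩
  set X := (M *ᵥ (A *ᵥ q)) ⬝ᵥ w j
  have hunit (i : Fin d) : w i ⬝ᵥ w i = 1 := by simpa using hworth i i
  have hL : sortedEigs M ⟨d - 1, by omega⟩ ≤ L :=
    sortedEigs_last_le_sortedEigs_zero_mul_mul hd hA.1 hM.1
      (by rw [hw, hAnorm, one_smul]) (hunit ⟨0, hd⟩)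
  have hLX : L * (q ⬝ᵥ w j) = sortedEigs A j * X := by
    rw [← smul_eq_mul, ← smul_dotProduct, ← hq2, ← mulVec_mulVec, ← mulVec_mulVec,
      hA.1.mulVec_dotProduct, hw, dotProduct_smul, smul_eq_mul]
  have hAq : (A *ᵥ q) ⬝ᵥ (A *ᵥ q) ≤ 1 := by
    simpa [hAnorm, hq1] using
      hA.1.mulVec_dotProduct_mulVec_le (hA.abs_eigenvalues_le_sortedEigs_zero hd) q
  have hX : |X| ≤ sortedEigs M ⟨0, hd⟩ :=
    hM.1.abs_mulVec_dotProduct_le (hM.sortedEigs_pos _).le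
      (hM.abs_eigenvalues_le_sortedEigs_zero hd) hAq (hunit j).le
  have hμ := hM.sortedEigs_pos ⟨d - 1, by omega⟩
  have hs := hA.sortedEigs_pos j
  have hLpos := hμ.trans_le hL
  have hk1 : (1 : ℝ) ≤ k := by exact_mod_cast one_le_two.trans hk
  calc |q ⬝ᵥ w j| / sortedEigs A j = |X| / L := by
        rw [div_eq_div_iff hs.ne' hLpos.ne', ← abs_of_pos hs, ← abs_of_pos hLpos, ← abs_mul,
          ← abs_mul, mul_comm _ L, hLX, mul_comm]
    _ ≤ sortedEigs M ⟨0, hd⟩ / sortedEigs M ⟨d - 1, by omega⟩ :=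
        div_le_div₀ (hM.sortedEigs_pos _).le hX hμ hL
    _ ≤ k * sortedEigs M ⟨0, hd⟩ / sortedEigs M ⟨d - 1, by omega⟩ := by
        gcongr
        exact le_mul_of_one_le_left (hM.sortedEigs_pos _).le hk1
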